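/- arXiv:2009.03538 — 2 statements merged into one kernel-verified Lean document; each statement's English description precedes it below -/
import Mathlib

section
/- For symmetric positive definite matrices P_i ∈ ℝ^{n×n}, P_j ∈ ℝ^{m×m}, an arbitrary cross-covariance matrix P_{ij} ∈ ℝ^{n×m}, and any ω ∈ (0,1): if the block matrix [[P_i, P_{ij}],[P_{ij}^T, P_j]] is positive semidefinite, then the block matrix [[(1/ω)P_i, 0],[0, (1/(1-ω))P_j]] minus [[P_i, P_{ij}],[P_{ij}^T, P_j]] is positive semidefinite, i.e., the block-diagonal inflation is an upper bound in the Loewner order regardless of the unknown cross term P_{ij}. -/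
open Matrix

/-!
Conjugating a positive semidefinite block matrix `[[A, B], [Bᵀ, D]]` by `diag(√c, -1/√c)`
yields the positive semidefinite matrix `[[c A, -B], [-Bᵀ, c⁻¹ D]]`. For `c = (1 - ω) / ω`
this is exactly `[[A/ω, 0], [0, D/(1 - ω)]] - [[A, B], [Bᵀ, D]]`, whatever the cross term `B`.
-/

namespace Matrix.PosSemidef

variable {n m R : Type*} [Fintype n] [Fintype m] [DecidableEq n] [DecidableEq m]

lemma fromBlocks_smul_smul [CommRing R] [PartialOrder R] [StarRing R] [StarOrderedRing R]
    {A : Matrix n n R} {B : Matrix n m R} {C : Matrix m n R} {D : Matrix m m R}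
    (h : (fromBlocks A B C D).PosSemidef) (t s : R) :
    (fromBlocks ((star t * t) • A) ((star t * s) • B) ((star s * t) • C)
      ((star s * s) • D)).PosSemidef := by
  simpa [fromBlocks_conjTranspose, fromBlocks_multiply, smul_smul, mul_comm] using
    h.conjTranspose_mul_mul_same (fromBlocks (t • 1 : Matrix n n R) 0 0 (s • 1 : Matrix m m R))

lemma fromBlocks_smul_neg_inv_smul {A : Matrix n n ℝ} {B : Matrix n m ℝ} {D : Matrix m m ℝ}
    (h : (fromBlocks A B Bᵀ D).PosSemidef) {c : ℝ} (hc : 0 < c) :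
    (fromBlocks (c • A) (-B) (-Bᵀ) (c⁻¹ • D)).PosSemidef := by
  have hsqrt : √c * √c = c := Real.mul_self_sqrt hc.le
  have hsqrt_ne : √c ≠ 0 := (Real.sqrt_pos.2 hc).ne'
  convert h.fromBlocks_smul_smul √c (-(√c)⁻¹) using 2
  all_goals first | rfl | simp [hsqrt, hsqrt_ne, ← mul_inv]

end Matrix.PosSemidef

theorem covariance_intersection_block_bound_general
    {n m : ℕ} (Pi : Matrix (Fin n) (Fin n) ℝ) (Pj : Matrix (Fin m) (Fin m) ℝ)
    (Pij : Matrix (Fin n) (Fin m) ℝ)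
    (ω : ℝ) (hω0 : 0 < ω) (hω1 : ω < 1)
    (hjoint : (Matrix.fromBlocks Pi Pij Pijᵀ Pj).PosSemidef) :
    (Matrix.fromBlocks ((1/ω) • Pi) 0 0 ((1/(1-ω)) • Pj)
      - Matrix.fromBlocks Pi Pij Pijᵀ Pj).PosSemidef := by
  have hω : 0 < 1 - ω := by linarith
  convert hjoint.fromBlocks_smul_neg_inv_smul (div_pos hω hω0) using 1
  rw [sub_eq_add_neg, fromBlocks_neg, fromBlocks_add, zero_add, zero_add]
  congr 1 <;> match_scalars <;> field_simp <;> ring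

/-- Eq. (14), covariance-intersection bound: for SPD `P_i`, `P_j`,
any cross-covariance `P_ij`, and `ω ∈ (0,1)`, if `[[P_i, P_ij],[P_ijᵀ, P_j]] ⪰ 0` then
`[[(1/ω)P_i, 0],[0, (1/(1-ω))P_j]] ⪰ [[P_i, P_ij],[P_ijᵀ, P_j]]` in the Loewner order. -/
theorem covariance_intersection_block_bound
    {n m : ℕ} (Pi : Matrix (Fin n) (Fin n) ℝ) (Pj : Matrix (Fin m) (Fin m) ℝ)
    (Pij : Matrix (Fin n) (Fin m) ℝ)
    (hPi : Pi.PosDef) (hPj : Pj.PosDef)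
    (ω : ℝ) (hω0 : 0 < ω) (hω1 : ω < 1)
    (hjoint : (Matrix.fromBlocks Pi Pij Pijᵀ Pj).PosSemidef) :
    (Matrix.fromBlocks ((1/ω) • Pi) 0 0 ((1/(1-ω)) • Pj)
      - Matrix.fromBlocks Pi Pij Pijᵀ Pj).PosSemidef :=
  covariance_intersection_block_bound_general Pi Pj Pij ω hω0 hω1 hjoint
end

section
/- Let Σ be a symmetric positive semidefinite (n+m+1)×(n+m+1) matrix with block structure [[P_i, P_{ij}, C_i],[P_{ij}^T, P_j, C_j],[C_i^T, C_j^T, B]] where P_i (n×n) and P_j (m×m) are positive definite and B > 0 is a scalar. Then for any ω ∈ (0,1), the matrix [[(1/ω)P_i, 0, C_i],[0, (1/(1−ω))P_j, C_j],[C_i^T, C_j^T, B]] − Σ is positive semidefinite. -/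
/-!
Outside the state block the difference vanishes, and on it the difference is
`[[((1-ω)/ω) P_i, -P_ij], [-P_ijᵀ, (ω/(1-ω)) P_j]]`. With `t² = (1-ω)/ω` this is the congruence
of the joint covariance by `diag(t I, -t⁻¹ I, 0)`, and congruences preserve positive
semidefiniteness.
-/

open Matrix

namespace Matrix.PosSemidef

variable {l m n o R : Type*} [Fintype m] [Fintype n] [Finite l] [Finite o]
  [Ring R] [PartialOrder R] [StarRing R]

theorem fromBlocks_conj_blockDiag {A : Matrix m m R} {B : Matrix m n R}
    {C : Matrix n m R} {D : Matrix n n R} (hM : (fromBlocks A B C D).PosSemidef)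
    (X : Matrix l m R) (Y : Matrix o n R) :
    (fromBlocks (X * A * Xᴴ) (X * B * Yᴴ) (Y * C * Xᴴ) (Y * D * Yᴴ)).PosSemidef := by
  simpa [fromBlocks_multiply, fromBlocks_conjTranspose] using
    hM.mul_mul_conjTranspose_same (fromBlocks X 0 0 Y)

end Matrix.PosSemidef

theorem extended_state_ci_bound_general
    {n m : ℕ} (Pi : Matrix (Fin n) (Fin n) ℝ) (Pj : Matrix (Fin m) (Fin m) ℝ)
    (Pij : Matrix (Fin n) (Fin m) ℝ)
    (Ci : Matrix (Fin n) (Fin 1) ℝ) (Cj : Matrix (Fin m) (Fin 1) ℝ)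
    (B : Matrix (Fin 1) (Fin 1) ℝ)
    (ω : ℝ) (hω0 : 0 < ω) (hω1 : ω < 1)
    (hjoint : (Matrix.fromBlocks (Matrix.fromBlocks Pi Pij Pijᵀ Pj)
        (Matrix.fromRows Ci Cj) (Matrix.fromRows Ci Cj)ᵀ B).PosSemidef) :
    (Matrix.fromBlocks (Matrix.fromBlocks ((1/ω) • Pi) 0 0 ((1/(1-ω)) • Pj))
        (Matrix.fromRows Ci Cj) (Matrix.fromRows Ci Cj)ᵀ B
      - Matrix.fromBlocks (Matrix.fromBlocks Pi Pij Pijᵀ Pj)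
        (Matrix.fromRows Ci Cj) (Matrix.fromRows Ci Cj)ᵀ B).PosSemidef := by
  have hpos : 0 < (1 - ω) / ω := div_pos (by linarith) hω0
  set t := √((1 - ω) / ω)
  have ht0 : t ≠ 0 := Real.sqrt_ne_zero'.mpr hpos
  have ht : t * t = (1 - ω) / ω := Real.mul_self_sqrt hpos.le
  have hi : ω⁻¹ - 1 = t * t := by rw [ht]; field_simp
  have hj : (1 - ω)⁻¹ - 1 = t⁻¹ * t⁻¹ := by
    rw [← mul_inv, ht, inv_div]; field_simp [(by linarith : 1 - ω ≠ 0)]; ring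
  have hconj := hjoint.fromBlocks_conj_blockDiag
    (fromBlocks (t • 1 : Matrix (Fin n) (Fin n) ℝ) 0 0 (-t⁻¹ • 1 : Matrix (Fin m) (Fin m) ℝ))
    (0 : Matrix (Fin 1) (Fin 1) ℝ)
  convert hconj using 1
  simp [fromBlocks_multiply, fromBlocks_transpose, sub_eq_add_neg, fromBlocks_neg, fromBlocks_add,
    smul_smul, ht0, ← hi, ← hj, add_smul]
  rw [← fromRows_neg, add_neg_cancel]

/-- extended-state CI bound in the Schmidt–Kalman NLoS update:
for a PSD joint covariance `Σ = [[P_i, P_ij, C_i],[P_ijᵀ, P_j, C_j],[C_iᵀ, C_jᵀ, B]]`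
with `P_i, P_j` positive definite and scalar bias variance `B > 0`, and any
`ω ∈ (0,1)`, the block-diagonal inflation that zeros out the cross term `P_ij`
(keeping the bias rows/columns) dominates `Σ` in the Loewner order. -/
theorem extended_state_ci_bound
    {n m : ℕ} (Pi : Matrix (Fin n) (Fin n) ℝ) (Pj : Matrix (Fin m) (Fin m) ℝ)
    (Pij : Matrix (Fin n) (Fin m) ℝ)
    (Ci : Matrix (Fin n) (Fin 1) ℝ) (Cj : Matrix (Fin m) (Fin 1) ℝ)
    (B : Matrix (Fin 1) (Fin 1) ℝ)
    (hPi : Pi.PosDef) (hPj : Pj.PosDef) (hB : 0 < B 0 0)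
    (ω : ℝ) (hω0 : 0 < ω) (hω1 : ω < 1)
    (hjoint : (Matrix.fromBlocks (Matrix.fromBlocks Pi Pij Pijᵀ Pj)
        (Matrix.fromRows Ci Cj) (Matrix.fromRows Ci Cj)ᵀ B).PosSemidef) :
    (Matrix.fromBlocks (Matrix.fromBlocks ((1/ω) • Pi) 0 0 ((1/(1-ω)) • Pj))
        (Matrix.fromRows Ci Cj) (Matrix.fromRows Ci Cj)ᵀ B
      - Matrix.fromBlocks (Matrix.fromBlocks Pi Pij Pijᵀ Pj)
        (Matrix.fromRows Ci Cj) (Matrix.fromRows Ci Cj)ᵀ B).PosSemidef :=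
  extended_state_ci_bound_general Pi Pj Pij Ci Cj B ω hω0 hω1 hjoint
end
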